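/- Let M be a given consumer rate budget and let μ₀ > 0 be a given rate. There exist a positive integer N₀ and a constant k_infl > 0 such that if N > N₀ and M_infl > N·k_infl, then the following is true: if Ω* = (μ*_infl, Λ*, X*) is a Nash equilibrium of the proxy game (with the tie-break convention that if Σ_{y∈C} μ*(y_infl|y) = 0 then μ*_infl(z) = M_infl/N for all z), then the influencer follows every producer with rate μ*_infl(z) ≥ μ₀ for all z ∈ C. -/

import Mathlib

open scoped Classical

noncomputable section

/-- Points of the `d`-dimensional Euclidean space. -/
abbrev E (d : ℕ) : Type := EuclideanSpace ℝ (Fin d)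

/-- An allocation `Ω = (μ_infl, Λ, X)`: `muI z` is the rate with which the
influencer follows producer `z`; `mu z y` is the rate with which consumer `y`
follows producer `z` directly; `muY y` is the rate with which consumer `y`
follows the influencer; `lam y` is the rate with which consumer `y` follows
outside sources; `X z` is the content topic created by producer `z`. -/
structure Alloc (d : ℕ) where
  muI : E d → ℝ
  mu  : E d → E d → ℝ
  muY : E d → ℝ
  lam : E d → ℝ
  X   : E d → E d

variable (d : ℕ)

/-- Admissibility of an allocation: nonnegative rates, the rate budget `M_infl`
of the influencer, the rate budget `M` of each consumer, and contents in `T`. -/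
def Admissible (T : Set (E d)) (C : Finset (E d)) (Minfl M : ℝ) (Ω : Alloc d) : Prop :=
  (∀ z ∈ C, 0 ≤ Ω.muI z) ∧ ((∑ z ∈ C, Ω.muI z) ≤ Minfl) ∧
  (∀ y ∈ C, (∀ z ∈ C.erase y, 0 ≤ Ω.mu z y) ∧ 0 ≤ Ω.muY y ∧ 0 ≤ Ω.lam y ∧
    ((∑ z ∈ C.erase y, Ω.mu z y) + Ω.muY y + Ω.lam y ≤ M)) ∧
  (∀ z ∈ C, Ω.X z ∈ T)

/-- `B(z|y) = q(x(z)|z) · p(x(z)|y)` where `p(x|y) = f(d(x,y))`, `q(x|y) = g(d(x,y))`. -/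
def Bfun (f g : ℝ → ℝ) (Ω : Alloc d) (z y : E d) : ℝ :=
  g (dist (Ω.X z) z) * f (dist (Ω.X z) y)

/-- The consumption utility `U_c(y|Ω)` of consumer `y`. -/
def Uc (f g I : ℝ → ℝ) (C : Finset (E d)) (rp r0 B0 : ℝ) (Ω : Alloc d) (y : E d) : ℝ :=
  rp * ∑ z ∈ C.erase y, Bfun d f g Ω z y * I (Ω.muI z) * I (Ω.muY y)
  + rp * ∑ z ∈ C.erase y, Bfun d f g Ω z y * I (Ω.mu z y)
  + r0 * B0 * I (Ω.lam y)

/-- The influencer utility `U_infl(μ_infl|Λ,X)`. -/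
def Uinfl (f g I : ℝ → ℝ) (C : Finset (E d)) (rp : ℝ) (Ω : Alloc d) : ℝ :=
  rp * ∑ z ∈ C, ∑ y ∈ C.erase z, Bfun d f g Ω z y * I (Ω.muI z) * I (Ω.muY y)

/-- The producer utility (social support) `U_p(z|Ω)` of producer `z`. -/
def Up (f g I : ℝ → ℝ) (C : Finset (E d)) (rp : ℝ) (Ω : Alloc d) (z : E d) : ℝ :=
  rp * ∑ y ∈ C.erase z, Bfun d f g Ω z y * I (Ω.muI z) * I (Ω.muY y)
  + rp * ∑ y ∈ C.erase z, Bfun d f g Ω z y * I (Ω.mu z y)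

/-- The social welfare `Φ(Ω) = Σ_{y∈C} U_c(y|Ω)`. -/
def Phi (f g I : ℝ → ℝ) (C : Finset (E d)) (rp r0 B0 : ℝ) (Ω : Alloc d) : ℝ :=
  ∑ y ∈ C, Uc d f g I C rp r0 B0 Ω y

/-- The allocation obtained from `Ω` when consumer `y` unilaterally deviates to
the rates `(mu', muY', lam')`. -/
def consDeviate (Ω : Alloc d) (y : E d) (mu' : E d → ℝ) (muY' lam' : ℝ) : Alloc d :=
  { Ω with
    mu := fun z w => if w = y then mu' z else Ω.mu z w,
    muY := Function.update Ω.muY y muY',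
    lam := Function.update Ω.lam y lam' }

/-- The influencer's rates are a best response: no feasible deviation of
`μ_infl` increases the influencer utility. -/
def InflBR (f g I : ℝ → ℝ) (C : Finset (E d)) (rp Minfl : ℝ) (Ω : Alloc d) : Prop :=
  ∀ μI' : E d → ℝ, (∀ z ∈ C, 0 ≤ μI' z) → ((∑ z ∈ C, μI' z) ≤ Minfl) →
    Uinfl d f g I C rp { Ω with muI := μI' } ≤ Uinfl d f g I C rp Ω

/-- Consumer `y`'s rates are a best response in the game with perfect
information: no feasible deviation increases the consumption utility. -/
def ConsBR (f g I : ℝ → ℝ) (C : Finset (E d)) (rp r0 B0 M : ℝ) (Ω : Alloc d) (y : E d) : Prop :=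
  ∀ (mu' : E d → ℝ) (muY' lam' : ℝ),
    (∀ z ∈ C.erase y, 0 ≤ mu' z) → 0 ≤ muY' → 0 ≤ lam' →
    ((∑ z ∈ C.erase y, mu' z) + muY' + lam' ≤ M) →
    Uc d f g I C rp r0 B0 (consDeviate d Ω y mu' muY' lam') y ≤ Uc d f g I C rp r0 B0 Ω y

/-- Producer `z`'s content is a best response: no deviation of the content
topic within `T` increases the producer's social support. -/
def ProdBR (f g I : ℝ → ℝ) (T : Set (E d)) (C : Finset (E d)) (rp : ℝ) (Ω : Alloc d) (z : E d) : Prop :=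
  ∀ x ∈ T, Up d f g I C rp { Ω with X := Function.update Ω.X z x } z ≤ Up d f g I C rp Ω z

/-- Nash equilibrium of the game with perfect information. -/
def NashPerfect (f g I : ℝ → ℝ) (T : Set (E d)) (C : Finset (E d))
    (rp r0 B0 Minfl M : ℝ) (Ω : Alloc d) : Prop :=
  Admissible d T C Minfl M Ω ∧
  InflBR d f g I C rp Minfl Ω ∧
  (∀ y ∈ C, ConsBR d f g I C rp r0 B0 M Ω y) ∧
  (∀ z ∈ C, ProdBR d f g I T C rp Ω z)

/-- Admissibility in the proxy game: in addition, consumers follow no producer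
directly. -/
def ProxyAdmissible (T : Set (E d)) (C : Finset (E d)) (Minfl M : ℝ) (Ω : Alloc d) : Prop :=
  Admissible d T C Minfl M Ω ∧ ∀ y ∈ C, ∀ z ∈ C.erase y, Ω.mu z y = 0

/-- Consumer `y`'s rates are a best response in the proxy game, where the
consumer may only follow the influencer and outside sources. -/
def ProxyConsBR (f g I : ℝ → ℝ) (C : Finset (E d)) (rp r0 B0 M : ℝ) (Ω : Alloc d) (y : E d) : Prop :=
  ∀ (muY' lam' : ℝ), 0 ≤ muY' → 0 ≤ lam' → muY' + lam' ≤ M →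
    Uc d f g I C rp r0 B0 (consDeviate d Ω y (fun _ => 0) muY' lam') y ≤
      Uc d f g I C rp r0 B0 Ω y

/-- Nash equilibrium of the proxy game. -/
def NashProxy (f g I : ℝ → ℝ) (T : Set (E d)) (C : Finset (E d))
    (rp r0 B0 Minfl M : ℝ) (Ω : Alloc d) : Prop :=
  ProxyAdmissible d T C Minfl M Ω ∧
  InflBR d f g I C rp Minfl Ω ∧
  (∀ y ∈ C, ProxyConsBR d f g I C rp r0 B0 M Ω y) ∧
  (∀ z ∈ C, ProdBR d f g I T C rp Ω z)

/-- Tie-break convention (Assumption 4): if no consumer follows the influencer,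
the influencer splits its rate budget uniformly. -/
def TieBreak (C : Finset (E d)) (Minfl : ℝ) (Ω : Alloc d) : Prop :=
  (∑ y ∈ C, Ω.muY y) = 0 → ∀ z ∈ C, Ω.muI z = Minfl / (C.card : ℝ)

/-!
At an equilibrium both the influencer and each consumer solve a concave allocation problem, so no
transfer of rate between two targets can pay off. Contents lie in `T`, so every `B(z|y)` lies in
`[B_m, 1]` with `B_m = g(diam T) f(diam T) > 0`; hence the influencer's weight for producer `z`,
`Σ_{y≠z} B(z|y) I(μ(y_infl|y))`, is comparable to the total audience `Σ_y I(μ(y_infl|y))` whenever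
some other consumer follows the influencer at least as much as `z` does. Since
`M_infl > N k_infl`, some producer receives more than `k_infl`, where `I` is nearly saturated;
moving `μ₀` from it to a producer with rate below `μ₀` would then pay off. This first gives rate
`μ₀` to every producer except possibly the top follower of the influencer. Then the influencer's
feed is worth at least `B_m I(μ₀) (N - 2)` to every consumer, which for `N > N₀` outweighs the
bounded value `r₀ B₀` of outside sources, so every consumer follows the influencer at rate at
least `M / 2`. Now all audiences are comparable and the transfer argument covers every producer.
If nobody follows the influencer, the tie-break gives each producer `M_infl / N > k_infl ≥ μ₀`.
-/

open Set Finset Filter Topology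

lemma ConcaveOn.map_add_sub_map_le {s : Set ℝ} {φ : ℝ → ℝ} (hφ : ConcaveOn ℝ s φ) {x y h : ℝ}
    (hx : x ∈ s) (hyh : y + h ∈ s) (hxy : x ≤ y) (hh : 0 ≤ h) :
    φ (y + h) - φ y ≤ φ (x + h) - φ x := by
  rcases (add_le_add hxy hh).eq_or_lt with hxyh | hxyh
  · obtain ⟨rfl, rfl⟩ : y = x ∧ h = 0 := by constructor <;> linarith
    rfl
  -- `x + h` and `y` are the convex combinations of `x` and `y + h` with swapped weights
  set t := (y - x) / (y + h - x)
  have hpos : 0 < y + h - x := by linarith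
  have ht : t * (y + h - x) = y - x := div_mul_cancel₀ _ hpos.ne'
  have ht0 : 0 ≤ t := div_nonneg (by linarith) hpos.le
  have ht1 : t ≤ 1 := (div_le_one hpos).2 (by linarith)
  have h₁ := hφ.2 hx hyh ht0 (sub_nonneg.2 ht1) (add_sub_cancel t 1)
  have h₂ := hφ.2 hx hyh (sub_nonneg.2 ht1) ht0 (sub_add_cancel 1 t)
  simp only [smul_eq_mul] at h₁ h₂
  rw [show t * x + (1 - t) * (y + h) = x + h by linear_combination -ht] at h₁
  rw [show (1 - t) * x + t * (y + h) = y by linear_combination ht] at h₂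
  linarith

lemma MonotoneOn.mapsTo_Icc_of_tendsto {φ : ℝ → ℝ} (hφ : MonotoneOn φ (Ici 0)) (h0 : φ 0 = 0)
    (hlim : Tendsto φ atTop (𝓝 1)) : MapsTo φ (Ici 0) (Icc 0 1) := fun t (ht : 0 ≤ t) =>
  ⟨h0 ▸ hφ self_mem_Ici ht ht, ge_of_tendsto hlim <| (eventually_ge_atTop t).mono fun _ hs =>
    hφ ht (ht.trans hs) hs⟩

namespace Finset

variable {α : Type*} [DecidableEq α] {s : Finset α}

lemma sum_apply_update {i : α} (hi : i ∈ s) (G : α → ℝ → ℝ) (x : α → ℝ) (a : ℝ) :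
    ∑ v ∈ s, G v (Function.update x i a v) = ∑ v ∈ s, G v (x v) + (G i a - G i (x i)) := by
  simp only [Function.apply_update G]
  rw [sum_update_of_mem hi, sum_eq_add_sum_sdiff_singleton_of_mem hi (fun v => G v (x v))]
  ring

lemma card_sub_one_mul_le_sum {G : α → ℝ} {m : ℝ} (hm : 0 ≤ m) (hG : ∀ v ∈ s, 0 ≤ G v) (i : α)
    (hGm : ∀ v ∈ s, v ≠ i → m ≤ G v) : ((#s : ℝ) - 1) * m ≤ ∑ v ∈ s, G v := by
  have hcard : (#s : ℝ) ≤ #(s.erase i) + 1 := by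
    have := pred_card_le_card_erase (s := s) (a := i)
    exact_mod_cast (by omega : #s ≤ #(s.erase i) + 1)
  calc ((#s : ℝ) - 1) * m ≤ #(s.erase i) * m := by gcongr; linarith
    _ ≤ ∑ v ∈ s.erase i, G v := by
        rw [← nsmul_eq_mul]
        exact card_nsmul_le_sum _ _ _ fun v hv => hGm v (mem_of_mem_erase hv) (ne_of_mem_erase hv)
    _ ≤ ∑ v ∈ s, G v := sum_le_sum_of_subset_of_nonneg (erase_subset i s) fun v hv _ => hG v hv

lemma mul_sum_le_two_mul_sum_erase {G : α → ℝ} (hG : ∀ v ∈ s, 0 ≤ G v) {m : ℝ} (hm : m ≤ 1)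
    {i j : α} (hi : i ∈ s) (hj : j ∈ s) (hij : i ≠ j) (hle : m * G i ≤ G j) :
    m * ∑ v ∈ s, G v ≤ 2 * ∑ v ∈ s.erase i, G v := by
  have hG' : ∀ v ∈ s.erase i, 0 ≤ G v := fun v hv => hG v (mem_of_mem_erase hv)
  have := single_le_sum hG' (mem_erase.2 ⟨hij.symm, hj⟩)
  have := mul_le_of_le_one_left (sum_nonneg hG') hm
  rw [← add_sum_erase s G hi, mul_add]
  linarith

end Finset

def IsOptimalSplit {α : Type*} (I : ℝ → ℝ) (s : Finset α) (c : α → ℝ) (K : ℝ) (x : α → ℝ) :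
    Prop :=
  ∀ x' : α → ℝ, (∀ v ∈ s, 0 ≤ x' v) → ∑ v ∈ s, x' v ≤ K →
    ∑ v ∈ s, I (x' v) * c v ≤ ∑ v ∈ s, I (x v) * c v

namespace IsOptimalSplit

variable {α : Type*} {I : ℝ → ℝ} {s : Finset α} {c : α → ℝ} {K : ℝ} {x : α → ℝ}

lemma sum_eq (hopt : IsOptimalSplit I s c K x) (hI : StrictMonoOn I (Ici 0))
    (hx : ∀ v ∈ s, 0 ≤ x v) (hxK : ∑ v ∈ s, x v ≤ K) {i : α} (hi : i ∈ s) (hc : 0 < c i) :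
    ∑ v ∈ s, x v = K := by
  classical
  by_contra hne
  set ε := K - ∑ v ∈ s, x v
  have hε : 0 < ε := sub_pos.2 (hxK.lt_of_ne hne)
  have hx' : ∀ v ∈ s, 0 ≤ Function.update x i (x i + ε) v := fun v hv => by
    rw [Function.update_apply]
    split_ifs with hvi
    · subst hvi; linarith [hx v hv]
    · exact hx v hv
  have hopt' := hopt _ hx' (by rw [sum_apply_update hi fun _ r => r]; linarith)
  rw [sum_apply_update hi fun v r => I r * c v] at hopt'
  have : I (x i) < I (x i + ε) :=
    hI (hx i hi) (mem_Ici.2 (by linarith [hx i hi])) (by linarith)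
  nlinarith

lemma exists_lt_apply (hopt : IsOptimalSplit I s c K x) (hI : StrictMonoOn I (Ici 0))
    (hx : ∀ v ∈ s, 0 ≤ x v) (hxK : ∑ v ∈ s, x v ≤ K) {i : α} (hi : i ∈ s) (hc : 0 < c i)
    {k : ℝ} (hk : #s * k < K) : ∃ j ∈ s, k < x j :=
  exists_lt_of_sum_lt <| by rwa [sum_const, nsmul_eq_mul, hopt.sum_eq hI hx hxK hi hc]

lemma transfer_le (hopt : IsOptimalSplit I s c K x) (hx : ∀ v ∈ s, 0 ≤ x v)
    (hxK : ∑ v ∈ s, x v ≤ K) {i j : α} (hi : i ∈ s) (hj : j ∈ s) (hij : i ≠ j) {ε : ℝ}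
    (hε : 0 ≤ ε) (hεj : ε ≤ x j) :
    c i * (I (x i + ε) - I (x i)) ≤ c j * (I (x j) - I (x j - ε)) := by
  classical
  set x' := Function.update (Function.update x j (x j - ε)) i (x i + ε)
  have hx' : ∀ v ∈ s, 0 ≤ x' v := fun v hv => by
    simp only [x', Function.update_apply]
    split_ifs with hvi hvj
    · subst hvi; linarith [hx v hv]
    · subst hvj; linarith
    · exact hx v hv
  have hsum (G : α → ℝ → ℝ) : ∑ v ∈ s, G v (x' v) =
      ∑ v ∈ s, G v (x v) + (G j (x j - ε) - G j (x j)) + (G i (x i + ε) - G i (x i)) := by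
    rw [sum_apply_update hi, sum_apply_update hj, Function.update_of_ne hij]
  have hopt' := hopt x' hx' (by rw [hsum fun _ r => r]; linarith)
  rw [hsum fun v r => I r * c v] at hopt'
  linarith

/-- If `j` receives `t + μ₀` with `I` nearly saturated at `t`, moving `μ₀` from `j` to an item
`i` of comparable weight that has less than `μ₀` would pay off. -/
lemma le_apply_of_le_weight (hopt : IsOptimalSplit I s c K x) (hI_conc : ConcaveOn ℝ (Ici 0) I)
    (hI_mono : MonotoneOn I (Ici 0)) (hI_mem : MapsTo I (Ici 0) (Icc 0 1))
    (hx : ∀ v ∈ s, 0 ≤ x v) (hxK : ∑ v ∈ s, x v ≤ K) {i j : α} (hi : i ∈ s) (hj : j ∈ s)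
    {μ₀ t β S : ℝ} (ht : 0 ≤ t) (hxj : t + μ₀ ≤ x j) (hS : 0 < S) (hci : β * S ≤ c i)
    (hcj : c j ≤ S) (hβ : 1 - I t < β * (I (2 * μ₀) - I μ₀)) : μ₀ ≤ x i := by
  by_contra! hlt
  have hμ₀ : 0 ≤ μ₀ := (hx i hi).trans hlt.le
  have hij : i ≠ j := by rintro rfl; linarith
  have hΔ : 0 ≤ I (2 * μ₀) - I μ₀ :=
    sub_nonneg.2 (hI_mono hμ₀ (mem_Ici.2 (by linarith)) (by linarith))
  have hβ₀ : 0 < β := pos_of_mul_pos_left ((sub_nonneg.2 (hI_mem ht).2).trans_lt hβ) hΔ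
  have hgain : I (2 * μ₀) - I μ₀ ≤ I (x i + μ₀) - I (x i) := by
    rw [two_mul]
    exact hI_conc.map_add_sub_map_le (hx i hi) (mem_Ici.2 (by linarith)) hlt.le hμ₀
  have hloss₀ : 0 ≤ I (x j) - I (x j - μ₀) :=
    sub_nonneg.2 (hI_mono (mem_Ici.2 (by linarith)) (mem_Ici.2 (by linarith)) (by linarith))
  have hloss : I (x j) - I (x j - μ₀) ≤ 1 - I t := by
    have := hI_mono ht (mem_Ici.2 (by linarith : (0 : ℝ) ≤ x j - μ₀)) (by linarith)
    linarith [(hI_mem (hx j hj)).2]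
  have key : β * S * (I (2 * μ₀) - I μ₀) ≤ S * (1 - I t) :=
    calc β * S * (I (2 * μ₀) - I μ₀) ≤ c i * (I (x i + μ₀) - I (x i)) :=
          mul_le_mul hci hgain hΔ ((mul_pos hβ₀ hS).le.trans hci)
      _ ≤ c j * (I (x j) - I (x j - μ₀)) := hopt.transfer_le hx hxK hi hj hij hμ₀ (by linarith)
      _ ≤ S * (1 - I t) := mul_le_mul hcj hloss hloss₀ hS.le
  linarith [mul_lt_mul_of_pos_left hβ hS]

end IsOptimalSplit

/-- Moving `M / 2` from the second source to the first is feasible when the first gets less than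
half of the budget `M`. -/
lemma mul_sub_le_of_lt_half {I : ℝ → ℝ} (hI_conc : ConcaveOn ℝ (Ici 0) I)
    (hI_mem : MapsTo I (Ici 0) (Icc 0 1)) {a b M m l : ℝ} (ha : 0 ≤ a) (hb : 0 ≤ b)
    (hm : 0 ≤ m) (hl : 0 ≤ l) (hml : m + l ≤ M)
    (hopt : ∀ m' l', 0 ≤ m' → 0 ≤ l' → m' + l' ≤ M → a * I m' + b * I l' ≤ a * I m + b * I l)
    (hmM : m < M / 2) : a * (I M - I (M / 2)) ≤ b := by
  set δ := min (M / 2) l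
  have hδl : δ ≤ l := min_le_right _ _
  have hbudget : m + M / 2 + (l - δ) ≤ M := by
    rcases le_total (M / 2) l with h | h
    · linarith [min_eq_left h]
    · linarith [min_eq_right h]
  have hopt' := hopt (m + M / 2) (l - δ) (by linarith) (by linarith) hbudget
  have hgain : I M - I (M / 2) ≤ I (m + M / 2) - I m := by
    have := hI_conc.map_add_sub_map_le (h := M / 2) hm (mem_Ici.2 (by linarith)) hmM.le
      (by linarith)
    rwa [add_halves] at this
  have hloss : I l - I (l - δ) ≤ 1 := by
    linarith [(hI_mem hl).2, (hI_mem (mem_Ici.2 (by linarith) : l - δ ∈ Set.Ici 0)).1]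
  nlinarith

/-- The coefficient of `I (μ_infl z)` in the influencer's utility, divided by `r_p`. -/
def inflWeight (f g I : ℝ → ℝ) (C : Finset (E d)) (Ω : Alloc d) (z : E d) : ℝ :=
  ∑ y ∈ C.erase z, Bfun d f g Ω z y * I (Ω.muY y)

/-- The coefficient of `I (μ(y_infl|y))` in the consumption utility of `y`, divided by `r_p`. -/
def feedValue (f g I : ℝ → ℝ) (C : Finset (E d)) (Ω : Alloc d) (y : E d) : ℝ :=
  ∑ z ∈ C.erase y, Bfun d f g Ω z y * I (Ω.muI z)

section ProxyGame

variable {d} {f g I : ℝ → ℝ} {T : Set (E d)} {C : Finset (E d)} {rp r0 B0 Minfl M : ℝ}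
  {Ω : Alloc d}

lemma Bfun_mem_Icc (hf : AntitoneOn f (Ici 0)) (hf' : MapsTo f (Ici 0) (Ioc 0 1))
    (hg : AntitoneOn g (Ici 0)) (hg' : MapsTo g (Ici 0) (Ioc 0 1)) (hT : Bornology.IsBounded T)
    {z y : E d} (hX : Ω.X z ∈ T) (hz : z ∈ T) (hy : y ∈ T) :
    Bfun d f g Ω z y ∈ Icc (g (Metric.diam T) * f (Metric.diam T)) 1 :=
  have hD : (0 : ℝ) ≤ Metric.diam T := Metric.diam_nonneg
  ⟨mul_le_mul (hg dist_nonneg hD (Metric.dist_le_diam_of_mem hT hX hz))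
      (hf dist_nonneg hD (Metric.dist_le_diam_of_mem hT hX hy)) (hf' hD).1.le
      (hg' dist_nonneg).1.le,
    mul_le_one₀ (hg' dist_nonneg).2 (hf' dist_nonneg).1.le (hf' dist_nonneg).2⟩

lemma inflWeight_le_sum {z : E d} (hB : ∀ y ∈ C, Bfun d f g Ω z y ≤ 1)
    (hv : ∀ y ∈ C, 0 ≤ I (Ω.muY y)) : inflWeight d f g I C Ω z ≤ ∑ y ∈ C, I (Ω.muY y) :=
  (sum_le_sum fun y hy => mul_le_of_le_one_left (hv y (mem_of_mem_erase hy))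
    (hB y (mem_of_mem_erase hy))).trans
  (sum_le_sum_of_subset_of_nonneg (erase_subset z C) fun y hy _ => hv y hy)

lemma mul_sum_le_inflWeight {Bm : ℝ} {z : E d} (hB : ∀ y ∈ C, Bm ≤ Bfun d f g Ω z y)
    (hv : ∀ y ∈ C, 0 ≤ I (Ω.muY y)) :
    Bm * ∑ y ∈ C.erase z, I (Ω.muY y) ≤ inflWeight d f g I C Ω z := by
  rw [mul_sum]
  exact sum_le_sum fun y hy => mul_le_mul_of_nonneg_right (hB y (mem_of_mem_erase hy))
    (hv y (mem_of_mem_erase hy))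

lemma mul_sum_le_feedValue {Bm : ℝ} {y : E d} (hB : ∀ z ∈ C, Bm ≤ Bfun d f g Ω z y)
    (hx : ∀ z ∈ C, 0 ≤ I (Ω.muI z)) :
    Bm * ∑ z ∈ C.erase y, I (Ω.muI z) ≤ feedValue d f g I C Ω y := by
  rw [mul_sum]
  exact sum_le_sum fun z hz => mul_le_mul_of_nonneg_right (hB z (mem_of_mem_erase hz))
    (hx z (mem_of_mem_erase hz))

lemma Uinfl_eq : Uinfl d f g I C rp Ω = rp * ∑ z ∈ C, I (Ω.muI z) * inflWeight d f g I C Ω z := by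
  simp only [Uinfl, inflWeight, mul_sum]
  exact sum_congr rfl fun z _ => sum_congr rfl fun y _ => by ring

lemma InflBR.isOptimalSplit (h : InflBR d f g I C rp Minfl Ω) (hrp : 0 < rp) :
    IsOptimalSplit I C (inflWeight d f g I C Ω) Minfl Ω.muI := fun x hx hxK => by
  have := h x hx hxK
  rw [Uinfl_eq, Uinfl_eq] at this
  exact le_of_mul_le_mul_left this hrp

lemma Uc_eq_of_mu_eq_zero (hI0 : I 0 = 0) {y : E d} (hmu : ∀ z ∈ C.erase y, Ω.mu z y = 0) :
    Uc d f g I C rp r0 B0 Ω y =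
      rp * feedValue d f g I C Ω y * I (Ω.muY y) + r0 * B0 * I (Ω.lam y) := by
  have : ∑ z ∈ C.erase y, Bfun d f g Ω z y * I (Ω.mu z y) = 0 :=
    sum_eq_zero fun z hz => by rw [hmu z hz, hI0, mul_zero]
  rw [Uc, this, feedValue, mul_zero, add_zero, ← sum_mul, mul_assoc rp]

lemma Uc_consDeviate (hI0 : I 0 = 0) (y : E d) (m l : ℝ) :
    Uc d f g I C rp r0 B0 (consDeviate d Ω y (fun _ => 0) m l) y =
      rp * feedValue d f g I C Ω y * I m + r0 * B0 * I l := by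
  rw [Uc_eq_of_mu_eq_zero hI0 fun z _ => if_pos rfl]
  simp only [consDeviate, Function.update_self]
  rfl

lemma NashProxy.exists_lt_muI (hΩ : NashProxy d f g I T C rp r0 B0 Minfl M Ω)
    (hI : StrictMonoOn I (Ici 0)) (hI_mem : MapsTo I (Ici 0) (Icc 0 1)) (hrp : 0 < rp)
    (hB : ∀ z ∈ C, ∀ y ∈ C, 0 < Bfun d f g Ω z y) (hC : 1 < #C) {ys : E d} (hys : ys ∈ C)
    (hys₀ : 0 < Ω.muY ys) {k : ℝ} (hk : #C * k < Minfl) : ∃ w ∈ C, k < Ω.muI w := by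
  obtain ⟨⟨⟨hμI, hμIK, hcons, -⟩, -⟩, hinfl, -⟩ := hΩ
  obtain ⟨w, hw, hwys⟩ := exists_mem_ne hC ys
  have hv : ∀ y ∈ C.erase w, 0 ≤ Bfun d f g Ω w y * I (Ω.muY y) := fun y hy =>
    mul_nonneg (hB w hw y (mem_of_mem_erase hy)).le (hI_mem (hcons y (mem_of_mem_erase hy)).2.1).1
  have hvys : 0 < I (Ω.muY ys) := (hI_mem self_mem_Ici).1.trans_lt (hI self_mem_Ici hys₀.le hys₀)
  have hc : 0 < inflWeight d f g I C Ω w := (mul_pos (hB w hw ys hys) hvys).trans_le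
    (single_le_sum hv (mem_erase.2 ⟨hwys.symm, hys⟩))
  exact (hinfl.isOptimalSplit hrp).exists_lt_apply hI hμI hμIK hw hc hk

lemma NashProxy.le_muI_of_le (hΩ : NashProxy d f g I T C rp r0 B0 Minfl M Ω)
    (hI_conc : ConcaveOn ℝ (Ici 0) I) (hI_mono : MonotoneOn I (Ici 0))
    (hI_mem : MapsTo I (Ici 0) (Icc 0 1)) (hrp : 0 < rp) {Bm : ℝ} (hBm : 0 ≤ Bm)
    (hB : ∀ z ∈ C, ∀ y ∈ C, Bfun d f g Ω z y ∈ Icc Bm 1) {m μ₀ t : ℝ} (hm : m ≤ 1) (ht : 0 ≤ t)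
    (hIt : 1 - I t < Bm * m / 2 * (I (2 * μ₀) - I μ₀)) {w : E d} (hw : w ∈ C)
    (hw_big : t + μ₀ ≤ Ω.muI w) (hS : 0 < ∑ y ∈ C, I (Ω.muY y)) {i j : E d} (hi : i ∈ C)
    (hj : j ∈ C) (hij : i ≠ j) (hle : m * I (Ω.muY i) ≤ I (Ω.muY j)) : μ₀ ≤ Ω.muI i := by
  obtain ⟨⟨⟨hμI, hμIK, hcons, -⟩, -⟩, hinfl, -⟩ := hΩ
  have hv : ∀ y ∈ C, 0 ≤ I (Ω.muY y) := fun y hy => (hI_mem (hcons y hy).2.1).1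
  refine (hinfl.isOptimalSplit hrp).le_apply_of_le_weight hI_conc hI_mono hI_mem hμI hμIK hi hw
    ht hw_big hS ?_ (inflWeight_le_sum (fun y hy => (hB w hw y hy).2) hv) hIt
  calc Bm * m / 2 * ∑ y ∈ C, I (Ω.muY y) = Bm / 2 * (m * ∑ y ∈ C, I (Ω.muY y)) := by ring
    _ ≤ Bm / 2 * (2 * ∑ y ∈ C.erase i, I (Ω.muY y)) := by
        gcongr ?_ * ?_
        exact mul_sum_le_two_mul_sum_erase hv hm hi hj hij hle
    _ = Bm * ∑ y ∈ C.erase i, I (Ω.muY y) := by ring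
    _ ≤ inflWeight d f g I C Ω i := mul_sum_le_inflWeight (fun y hy => (hB i hi y hy).1) hv

lemma NashProxy.feedValue_mul_le (hΩ : NashProxy d f g I T C rp r0 B0 Minfl M Ω)
    (hI_conc : ConcaveOn ℝ (Ici 0) I) (hI_mem : MapsTo I (Ici 0) (Icc 0 1)) (hI0 : I 0 = 0)
    (hrp : 0 ≤ rp) (hr0B0 : 0 ≤ r0 * B0) {y : E d} (hy : y ∈ C)
    (hfeed : 0 ≤ feedValue d f g I C Ω y) (hlt : Ω.muY y < M / 2) :
    rp * feedValue d f g I C Ω y * (I M - I (M / 2)) ≤ r0 * B0 := by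
  obtain ⟨⟨⟨-, -, hcons, -⟩, hmu⟩, -, hbr, -⟩ := hΩ
  obtain ⟨-, hm, hl, hbudget⟩ := hcons y hy
  rw [sum_eq_zero (hmu y hy), zero_add] at hbudget
  refine mul_sub_le_of_lt_half hI_conc hI_mem (mul_nonneg hrp hfeed) hr0B0 hm hl hbudget
    (fun m' l' hm' hl' hml' => ?_) hlt
  have := hbr y hy m' l' hm' hl' hml'
  rwa [Uc_consDeviate hI0, Uc_eq_of_mu_eq_zero hI0 (hmu y hy)] at this

lemma NashProxy.half_le_muY (hΩ : NashProxy d f g I T C rp r0 B0 Minfl M Ω)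
    (hI_conc : ConcaveOn ℝ (Ici 0) I) (hI_mono : MonotoneOn I (Ici 0))
    (hI_mem : MapsTo I (Ici 0) (Icc 0 1)) (hI0 : I 0 = 0) (hrp : 0 ≤ rp) (hr0B0 : 0 ≤ r0 * B0)
    {Bm : ℝ} (hBm : 0 ≤ Bm) (hB : ∀ z ∈ C, ∀ y ∈ C, Bm ≤ Bfun d f g Ω z y) {μ₀ : ℝ}
    (hμ₀ : 0 ≤ μ₀) {v : E d} (hμI : ∀ w ∈ C, w ≠ v → μ₀ ≤ Ω.muI w)
    (hN : r0 * B0 < rp * (Bm * I μ₀) * (I M - I (M / 2)) * (#C - 2)) {y : E d} (hy : y ∈ C) :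
    M / 2 ≤ Ω.muY y := by
  by_contra! hlt
  have hx : ∀ z ∈ C, 0 ≤ Ω.muI z := hΩ.1.1.1
  have hIx : ∀ z ∈ C.erase y, 0 ≤ I (Ω.muI z) := fun z hz =>
    (hI_mem (hx z (mem_of_mem_erase hz))).1
  have hsum : ((#C : ℝ) - 2) * I μ₀ ≤ ∑ z ∈ C.erase y, I (Ω.muI z) := by
    have := card_sub_one_mul_le_sum (hI_mem hμ₀).1 hIx v fun z hz hzv =>
      hI_mono hμ₀ (hx z (mem_of_mem_erase hz)) (hμI z (mem_of_mem_erase hz) hzv)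
    rwa [cast_card_erase_of_mem hy, sub_sub, one_add_one_eq_two] at this
  have hfeed := mul_sum_le_feedValue (fun z hz => hB z hz y hy) fun z hz => (hI_mem (hx z hz)).1
  have hbound := hΩ.feedValue_mul_le hI_conc hI_mem hI0 hrp hr0B0 hy
    ((mul_nonneg hBm (sum_nonneg hIx)).trans hfeed) hlt
  have hΔ : 0 ≤ rp * (I M - I (M / 2)) := by
    have : 0 ≤ Ω.muY y := (hΩ.1.1.2.2.1 y hy).2.1
    exact mul_nonneg hrp <| sub_nonneg.2 <|
      hI_mono (mem_Ici.2 (by linarith)) (mem_Ici.2 (by linarith)) (by linarith)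
  have := mul_le_mul_of_nonneg_left (mul_le_mul_of_nonneg_left hsum hBm) hΔ
  have := mul_le_mul_of_nonneg_left hfeed hΔ
  linarith

lemma NashProxy.le_muI (hΩ : NashProxy d f g I T C rp r0 B0 Minfl M Ω)
    (hI : StrictMonoOn I (Ici 0)) (hI_conc : ConcaveOn ℝ (Ici 0) I)
    (hI_mem : MapsTo I (Ici 0) (Icc 0 1)) (hI0 : I 0 = 0) (hrp : 0 < rp) (hr0B0 : 0 ≤ r0 * B0)
    (hM : 0 ≤ M) {Bm : ℝ} (hBm : 0 < Bm) (hB : ∀ z ∈ C, ∀ y ∈ C, Bfun d f g Ω z y ∈ Icc Bm 1)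
    {μ₀ t : ℝ} (hμ₀ : 0 ≤ μ₀) (ht : 0 ≤ t)
    (hIt : 1 - I t < Bm * I (M / 2) / 2 * (I (2 * μ₀) - I μ₀)) (hC : 2 < #C)
    (hN : r0 * B0 < rp * (Bm * I μ₀) * (I M - I (M / 2)) * (#C - 2))
    (hK : #C * (t + μ₀) < Minfl) (hS : ∑ y ∈ C, Ω.muY y ≠ 0) {z : E d} (hz : z ∈ C) :
    μ₀ ≤ Ω.muI z := by
  have hμY : ∀ y ∈ C, 0 ≤ Ω.muY y := fun y hy => (hΩ.1.1.2.2.1 y hy).2.1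
  have hIμY : ∀ y ∈ C, I (Ω.muY y) ∈ Icc (0 : ℝ) 1 := fun y hy => hI_mem (hμY y hy)
  have hIM : I (M / 2) ∈ Icc (0 : ℝ) 1 := hI_mem (mem_Ici.2 (by linarith))
  obtain ⟨ys, hys, hys₀⟩ : ∃ ys ∈ C, 0 < Ω.muY ys := by
    by_contra! h
    exact hS (sum_eq_zero fun y hy => le_antisymm (h y hy) (hμY y hy))
  obtain ⟨w, hw, hw_big⟩ := hΩ.exists_lt_muI hI hI_mem hrp
    (fun z hz y hy => hBm.trans_le (hB z hz y hy).1) (by omega) hys hys₀ hK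
  have hS' : 0 < ∑ y ∈ C, I (Ω.muY y) :=
    ((hI_mem self_mem_Ici).1.trans_lt (hI self_mem_Ici (hμY ys hys) hys₀)).trans_le
      (single_le_sum (fun y hy => (hIμY y hy).1) hys)
  have key : ∀ i ∈ C, ∀ j ∈ C, i ≠ j → I (M / 2) * I (Ω.muY i) ≤ I (Ω.muY j) →
      μ₀ ≤ Ω.muI i := fun i hi j hj =>
    hΩ.le_muI_of_le hI_conc hI.monotoneOn hI_mem hrp hBm.le hB hIM.2 ht hIt hw hw_big.le hS' hi hj
  -- compare first with a top follower `v` of the influencer, then, once every consumer follows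
  -- the influencer at rate `M / 2`, with any other consumer
  obtain ⟨v, hv, hv_max⟩ := exists_max_image C Ω.muY ⟨ys, hys⟩
  have hμI : ∀ i ∈ C, i ≠ v → μ₀ ≤ Ω.muI i := fun i hi hiv =>
    key i hi v hv hiv <| (mul_le_of_le_one_left (hIμY i hi).1 hIM.2).trans
      (hI.monotoneOn (hμY i hi) (hμY v hv) (hv_max i hi))
  have hμY_half : ∀ y ∈ C, M / 2 ≤ Ω.muY y := fun y hy =>
    hΩ.half_le_muY hI_conc hI.monotoneOn hI_mem hI0 hrp.le hr0B0 hBm.le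
      (fun z hz y hy => (hB z hz y hy).1) hμ₀ hμI hN hy
  obtain ⟨j, hj, hjz⟩ := exists_mem_ne (by omega : 1 < #C) z
  exact key z hz j hj hjz.symm <| (mul_le_of_le_one_right hIM.1 (hIμY z hz).2).trans
    (hI.monotoneOn (mem_Ici.2 (by linarith)) (hμY j hj) (hμY_half j hj))

end ProxyGame

theorem stmt18_general (d : ℕ) (f g I : ℝ → ℝ)
    (hf_anti : StrictAntiOn f (Set.Ici 0))
    (hf_rng : ∀ t ∈ Set.Ici (0 : ℝ), f t ∈ Set.Ioc (0 : ℝ) 1)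
    (hg_anti : StrictAntiOn g (Set.Ici 0))
    (hg_rng : ∀ t ∈ Set.Ici (0 : ℝ), g t ∈ Set.Ioc (0 : ℝ) 1)
    (hI_mono : StrictMonoOn I (Set.Ici 0))
    (hI_conc : StrictConcaveOn ℝ (Set.Ici 0) I)
    (hI_zero : I 0 = 0)
    (hI_lim : Filter.Tendsto I Filter.atTop (nhds 1))
    (T : Set (E d)) (hT_comp : IsCompact T)
    (rp r0 B0 : ℝ) (hrp : 0 < rp) (hr0 : 0 < r0) (hB0 : 0 < B0)
    (M : ℝ) (hM : 0 < M)
    (μ₀ : ℝ) (hμ₀ : 0 < μ₀) :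
    ∃ (N₀ : ℕ) (kinfl : ℝ), 0 < kinfl ∧
      ∀ C : Finset (E d), ↑C ⊆ T → N₀ < C.card →
        ∀ Minfl : ℝ, (C.card : ℝ) * kinfl < Minfl →
          ∀ Ω : Alloc d, NashProxy d f g I T C rp r0 B0 Minfl M Ω →
            TieBreak d C Minfl Ω →
            ∀ z ∈ C, μ₀ ≤ Ω.muI z := by
  have hI_mem := hI_mono.monotoneOn.mapsTo_Icc_of_tendsto hI_zero hI_lim
  have hI_pos (s : ℝ) (hs : 0 < s) : 0 < I s := hI_zero ▸ hI_mono self_mem_Ici hs.le hs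
  have hI_lt {s s' : ℝ} (hs : 0 < s) (hss' : s < s') : 0 < I s' - I s :=
    sub_pos.2 (hI_mono hs.le (Set.mem_Ici.2 (by linarith)) hss')
  set Bm := g (Metric.diam T) * f (Metric.diam T)
  have hBm : 0 < Bm := mul_pos (hg_rng _ Metric.diam_nonneg).1 (hf_rng _ Metric.diam_nonneg).1
  have hκ : 0 < Bm * I (M / 2) / 2 * (I (2 * μ₀) - I μ₀) :=
    mul_pos (by have := hI_pos (M / 2) (by positivity); positivity) (hI_lt hμ₀ (by linarith))
  obtain ⟨t, hIt, ht⟩ :=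
    ((hI_lim.eventually (lt_mem_nhds (sub_lt_self 1 hκ))).and (eventually_ge_atTop 0)).exists
  have hq : 0 < rp * (Bm * I μ₀) * (I M - I (M / 2)) :=
    mul_pos (mul_pos hrp (mul_pos hBm (hI_pos μ₀ hμ₀))) (hI_lt (by positivity) (by linarith))
  obtain ⟨n, hn⟩ := exists_nat_gt (r0 * B0 / (rp * (Bm * I μ₀) * (I M - I (M / 2))))
  refine ⟨n + 2, t + μ₀, by linarith, fun C hCT hC Minfl hK Ω hΩ hTie z hz => ?_⟩
  by_cases hS : ∑ y ∈ C, Ω.muY y = 0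
  · rw [hTie hS z hz, le_div_iff₀ (Nat.cast_pos.2 (by omega))]
    nlinarith
  have hB : ∀ z ∈ C, ∀ y ∈ C, Bfun d f g Ω z y ∈ Set.Icc Bm 1 := fun z hz y hy =>
    Bfun_mem_Icc hf_anti.antitoneOn hf_rng hg_anti.antitoneOn hg_rng hT_comp.isBounded
      (hΩ.1.1.2.2.2 z hz) (hCT hz) (hCT hy)
  have hN : r0 * B0 < rp * (Bm * I μ₀) * (I M - I (M / 2)) * (#C - 2) := by
    rw [div_lt_iff₀ hq] at hn
    have : (n : ℝ) + 2 < #C := by exact_mod_cast hC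
    nlinarith
  exact hΩ.le_muI hI_mono hI_conc.concaveOn hI_mem hI_zero hrp (by positivity) hM.le hBm hB
    hμ₀.le ht (by linarith) (by omega) hN hK hS hz

/-- **Proposition 9.** Let `M` be a given consumer rate budget
and let `μ₀ > 0` be a given rate.  There exist a positive integer `N₀` and a
constant `k_infl > 0` such that if `N > N₀` and `M_infl > N·k_infl`, then the
following is true: if `Ω* = (μ*_infl, Λ*, X*)` is a Nash equilibrium of the
proxy game (with the tie-break convention that if `Σ_{y∈C} μ*(y_infl|y) = 0`
then `μ*_infl(z) = M_infl/N` for all `z`), then the influencer follows every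
producer with rate `μ*_infl(z) ≥ μ₀` for all `z ∈ C`. -/
theorem stmt18 (d : ℕ) (f g I : ℝ → ℝ)
    (hf_cont : ContinuousOn f (Set.Ici 0)) (hf_anti : StrictAntiOn f (Set.Ici 0))
    (hf_rng : ∀ t ∈ Set.Ici (0 : ℝ), f t ∈ Set.Ioc (0 : ℝ) 1)
    (hg_cont : ContinuousOn g (Set.Ici 0)) (hg_anti : StrictAntiOn g (Set.Ici 0))
    (hg_rng : ∀ t ∈ Set.Ici (0 : ℝ), g t ∈ Set.Ioc (0 : ℝ) 1)
    (hI_diff : ContDiffOn ℝ 1 I (Set.Ici 0))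
    (hI_mono : StrictMonoOn I (Set.Ici 0))
    (hI_conc : StrictConcaveOn ℝ (Set.Ici 0) I)
    (hI_zero : I 0 = 0)
    (hI_lim : Filter.Tendsto I Filter.atTop (nhds 1))
    (T : Set (E d)) (hT_ne : T.Nonempty) (hT_conv : Convex ℝ T) (hT_comp : IsCompact T)
    (rp r0 B0 : ℝ) (hrp : 0 < rp) (hr0 : 0 < r0) (hB0 : 0 < B0)
    (M : ℝ) (hM : 0 < M)
    (μ₀ : ℝ) (hμ₀ : 0 < μ₀) :
    ∃ (N₀ : ℕ) (kinfl : ℝ), 0 < kinfl ∧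
      ∀ C : Finset (E d), ↑C ⊆ T → N₀ < C.card →
        ∀ Minfl : ℝ, (C.card : ℝ) * kinfl < Minfl →
          ∀ Ω : Alloc d, NashProxy d f g I T C rp r0 B0 Minfl M Ω →
            TieBreak d C Minfl Ω →
            ∀ z ∈ C, μ₀ ≤ Ω.muI z :=
  stmt18_general d f g I hf_anti hf_rng hg_anti hg_rng hI_mono hI_conc hI_zero hI_lim T hT_comp rp
    r0 B0 hrp hr0 hB0 M hM μ₀ hμ₀
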